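/- arXiv:1901.00592 — 3 statements merged into one kernel-verified Lean document; each statement's English description precedes it below -/
import Mathlib

section
/- The category of site-graphs has all pullbacks: for every cospan G1 → M ← G2 of site-graph morphisms there exists a site-graph O with morphisms g1 : O → G1, g2 : O → G2 making the square commute, and satisfying the universal property of the pullback. -/
open CategoryTheory

structure SiteGraph (K : Type) (site : K → ℕ) : Type 1 where
  Agent : Type
  ty : Agent → K
  nodes : Set (Option (Agent × ℕ))
  free_mem : none ∈ nodes
  nodes_ok : ∀ a i, some (a, i) ∈ nodes → i < site (ty a)
  edges : Set (Option (Agent × ℕ) × Option (Agent × ℕ))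
  edges_sub : ∀ e ∈ edges, e.1 ∈ nodes ∧ e.2 ∈ nodes
  edges_symm : ∀ n m, (n, m) ∈ edges → (m, n) ∈ edges
  conflict_free : ∀ n1 n2 n1' n2',
    (n1, n2) ∈ edges → (n1', n2') ∈ edges →
    (n1 = n1' ∧ n2 = n2') ∨ (n1 = n2' ∧ n2 = n1') ∨
    (({n1, n2} ∩ {n1', n2'} : Set (Option (Agent × ℕ))) ⊆ {none})

namespace SiteGraph

variable {K : Type} {site : K → ℕ}

/-- The action of an agent map on nodes: `free` (i.e. `none`) goes to `free`,
`(a, i)` goes to `(v a, i)`. -/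
def nodeMap {A B : Type} (v : A → B) : Option (A × ℕ) → Option (B × ℕ) :=
  Option.map fun p => (v p.1, p.2)

@[simp] lemma nodeMap_id {A : Type} (n : Option (A × ℕ)) : nodeMap id n = n := by
  cases n <;> rfl

@[simp] lemma nodeMap_comp {A B C : Type} (v : A → B) (w : B → C) (n : Option (A × ℕ)) :
    nodeMap w (nodeMap v n) = nodeMap (w ∘ v) n := by cases n <;> rfl

/-- A morphism of site-graphs. -/
@[ext]
structure Hom (G H : SiteGraph K site) : Type where
  v : G.Agent → H.Agent
  pres_ty : ∀ a, H.ty (v a) = G.ty a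
  maps_nodes : ∀ n ∈ G.nodes, nodeMap v n ∈ H.nodes
  maps_edges : ∀ e ∈ G.edges, (nodeMap v e.1, nodeMap v e.2) ∈ H.edges

def idHom (G : SiteGraph K site) : Hom G G where
  v := id
  pres_ty _ := rfl
  maps_nodes n hn := by simpa using hn
  maps_edges e he := by rcases e with ⟨n, m⟩; simpa using he

def compHom {G H I : SiteGraph K site} (f : Hom G H) (g : Hom H I) : Hom G I where
  v := g.v ∘ f.v
  pres_ty a := (g.pres_ty _).trans (f.pres_ty a)
  maps_nodes n hn := by
    rw [← nodeMap_comp]; exact g.maps_nodes _ (f.maps_nodes n hn)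
  maps_edges e he := by
    rw [← nodeMap_comp, ← nodeMap_comp]
    exact g.maps_edges _ (f.maps_edges e he)

instance : Category (SiteGraph K site) where
  Hom := Hom
  id := idHom
  comp := compHom
  id_comp _ := rfl
  comp_id _ := rfl
  assoc _ _ _ := rfl

end SiteGraph

/-!
The pullback of `f : G₁ ⟶ M ← G₂ : g` is computed agent-wise: its agents are the pairs
`(a₁, a₂)` with `f a₁ = g a₂`, and a node or edge is present when both of its projections
are. The only axiom needing an argument is conflict-freeness. Two edges of the pullback
project to two edges of `G₁` and two of `G₂`; if either pair shares no bound node, neither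
does the original pair, and otherwise the projections are equal or swapped on each side.
When the two sides disagree (equal on one, swapped on the other), a single shared node
forces, by joint injectivity of the projections, the edges themselves to be equal or swapped.
-/

open CategoryTheory Limits Function

namespace SiteGraph

def ConflictFree {A : Type} (E : Set (Option A × Option A)) : Prop :=
  ∀ n1 n2 n1' n2', (n1, n2) ∈ E → (n1', n2') ∈ E →
    (n1 = n1' ∧ n2 = n2') ∨ (n1 = n2' ∧ n2 = n1') ∨
    (({n1, n2} ∩ {n1', n2'} : Set (Option A)) ⊆ {none})

lemma _root_.Option.map_prodMk_injective {A B C : Type} {u : A → B} {w : A → C}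
    (huw : Injective fun a => (u a, w a)) :
    Injective fun n : Option A => (n.map u, n.map w) := by
  rintro (_ | a) (_ | b) h <;> simp only [Option.map_none, Option.map_some, Prod.mk.injEq,
    reduceCtorEq, and_self, Option.some.injEq] at h ⊢
  exact huw (Prod.ext h.1 h.2)

lemma inter_subset_none_of_map {A B : Type} (u : A → B) {n1 n2 n1' n2' : Option A}
    (h : ({n1.map u, n2.map u} ∩ {n1'.map u, n2'.map u} : Set (Option B)) ⊆ {none}) :
    ({n1, n2} ∩ {n1', n2'} : Set (Option A)) ⊆ {none} := by
  rw [← Set.image_pair, ← Set.image_pair] at h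
  exact fun x hx => Option.map_eq_none_iff.mp (h (Set.image_inter_subset _ _ _ ⟨x, hx, rfl⟩))

lemma eq_or_swap_or_inter_eq_empty {N X Y : Type} {F : N → X} {G : N → Y}
    (hFG : Injective fun n => (F n, G n)) {n1 n2 n1' n2' : N}
    (hF1 : F n1 = F n1') (hF2 : F n2 = F n2') (hG1 : G n1 = G n2') (hG2 : G n2 = G n1') :
    (n1 = n1' ∧ n2 = n2') ∨ (n1 = n2' ∧ n2 = n1') ∨
      ({n1, n2} ∩ {n1', n2'} : Set N) = ∅ := by
  have inj : ∀ {a b}, F a = F b → G a = G b → a = b := fun hF hG => hFG (Prod.ext hF hG)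
  by_cases hmeet : n1 = n1' ∨ n1 = n2' ∨ n2 = n1' ∨ n2 = n2'
  · rcases hmeet with h | h | h | h
    · exact .inl ⟨h, inj hF2 (by rw [hG2, ← h, hG1])⟩
    · exact .inr (.inl ⟨h, inj (by rw [hF2, ← h, hF1]) hG2⟩)
    · exact .inr (.inl ⟨inj (by rw [hF1, ← h, hF2]) hG1, h⟩)
    · exact .inl ⟨inj hF1 (by rw [hG1, ← h, hG2]), h⟩
  · push Not at hmeet
    refine .inr (.inr (Set.eq_empty_of_forall_notMem ?_))
    rintro x ⟨rfl | rfl, rfl | rfl⟩ <;> simp_all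

theorem ConflictFree.of_map {A B C : Type} {u : A → B} {w : A → C}
    (huw : Injective fun a => (u a, w a)) {E : Set (Option A × Option A)}
    {EB : Set (Option B × Option B)} {EC : Set (Option C × Option C)}
    (hB : ConflictFree EB) (hC : ConflictFree EC)
    (hEB : ∀ n m, (n, m) ∈ E → (n.map u, m.map u) ∈ EB)
    (hEC : ∀ n m, (n, m) ∈ E → (n.map w, m.map w) ∈ EC) :
    ConflictFree E := by
  intro n1 n2 n1' n2' h h'
  have hinj := Option.map_prodMk_injective huw
  have of_empty : ({n1, n2} ∩ {n1', n2'} : Set (Option A)) = ∅ →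
      ({n1, n2} ∩ {n1', n2'} : Set (Option A)) ⊆ {none} := fun h => h ▸ Set.empty_subset _
  have hC' := hC _ _ _ _ (hEC _ _ h) (hEC _ _ h')
  rcases hB _ _ _ _ (hEB _ _ h) (hEB _ _ h') with ⟨hu1, hu2⟩ | ⟨hu1, hu2⟩ | hu
  · rcases hC' with ⟨hw1, hw2⟩ | ⟨hw1, hw2⟩ | hw
    · exact .inl ⟨hinj (Prod.ext hu1 hw1), hinj (Prod.ext hu2 hw2)⟩
    · exact (eq_or_swap_or_inter_eq_empty hinj hu1 hu2 hw1 hw2).imp_right (.imp_right of_empty)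
    · exact .inr (.inr (inter_subset_none_of_map w hw))
  · rcases hC' with ⟨hw1, hw2⟩ | ⟨hw1, hw2⟩ | hw
    · exact (eq_or_swap_or_inter_eq_empty (Prod.swap_injective.comp hinj) hw1 hw2 hu1 hu2)
        |>.imp_right (.imp_right of_empty)
    · exact .inr (.inl ⟨hinj (Prod.ext hu1 hw1), hinj (Prod.ext hu2 hw2)⟩)
    · exact .inr (.inr (inter_subset_none_of_map w hw))
  · exact .inr (.inr (inter_subset_none_of_map u hu))

variable {K : Type} {site : K → ℕ} {G₁ G₂ M : SiteGraph K site} (f : G₁ ⟶ M) (g : G₂ ⟶ M)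

def PullbackAgent : Type := {p : G₁.Agent × G₂.Agent // f.v p.1 = g.v p.2}

def PullbackAgent.fst (a : PullbackAgent f g) : G₁.Agent := a.1.1

def PullbackAgent.snd (a : PullbackAgent f g) : G₂.Agent := a.1.2

variable {f g} in
def PullbackAgent.lift {W : SiteGraph K site} (h₁ : W ⟶ G₁) (h₂ : W ⟶ G₂)
    (w : h₁ ≫ f = h₂ ≫ g) (a : W.Agent) : PullbackAgent f g :=
  ⟨(h₁.v a, h₂.v a), congrFun (congrArg Hom.v w) a⟩

lemma PullbackAgent.injective_node :
    Injective fun p : PullbackAgent f g × ℕ => ((p.1.fst, p.2), (p.1.snd, p.2)) := by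
  rintro ⟨a, i⟩ ⟨b, j⟩ h
  simp only [Prod.mk.injEq] at h
  exact Prod.ext (Subtype.ext (Prod.ext h.1.1 h.2.1)) h.1.2

def pullback : SiteGraph K site where
  Agent := PullbackAgent f g
  ty a := G₁.ty a.fst
  nodes := {n | nodeMap (PullbackAgent.fst f g) n ∈ G₁.nodes ∧
                nodeMap (PullbackAgent.snd f g) n ∈ G₂.nodes}
  free_mem := ⟨G₁.free_mem, G₂.free_mem⟩
  nodes_ok _ i h := G₁.nodes_ok _ i h.1
  edges := {e |
    (nodeMap (PullbackAgent.fst f g) e.1, nodeMap (PullbackAgent.fst f g) e.2) ∈ G₁.edges ∧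
    (nodeMap (PullbackAgent.snd f g) e.1, nodeMap (PullbackAgent.snd f g) e.2) ∈ G₂.edges}
  edges_sub _ he :=
    ⟨⟨(G₁.edges_sub _ he.1).1, (G₂.edges_sub _ he.2).1⟩,
     ⟨(G₁.edges_sub _ he.1).2, (G₂.edges_sub _ he.2).2⟩⟩
  edges_symm _ _ h := ⟨G₁.edges_symm _ _ h.1, G₂.edges_symm _ _ h.2⟩
  conflict_free := ConflictFree.of_map (PullbackAgent.injective_node f g)
    G₁.conflict_free G₂.conflict_free (fun _ _ h => h.1) (fun _ _ h => h.2)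

def pullbackFst : pullback f g ⟶ G₁ where
  v := PullbackAgent.fst f g
  pres_ty _ := rfl
  maps_nodes _ hn := hn.1
  maps_edges _ he := he.1

def pullbackSnd : pullback f g ⟶ G₂ where
  v := PullbackAgent.snd f g
  pres_ty a := (g.pres_ty _).symm.trans ((congrArg M.ty a.2.symm).trans (f.pres_ty _))
  maps_nodes _ hn := hn.2
  maps_edges _ he := he.2

lemma pullback_condition : pullbackFst f g ≫ f = pullbackSnd f g ≫ g :=
  Hom.ext (funext fun a => a.2)

variable {f g} in
def pullbackLift {W : SiteGraph K site} (h₁ : W ⟶ G₁) (h₂ : W ⟶ G₂)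
    (w : h₁ ≫ f = h₂ ≫ g) : W ⟶ pullback f g where
  v := PullbackAgent.lift h₁ h₂ w
  pres_ty a := h₁.pres_ty a
  -- `erw`: the agents of `pullback f g` are `PullbackAgent f g` only up to unfolding.
  maps_nodes n hn := by
    refine ⟨?_, ?_⟩ <;> erw [nodeMap_comp]
    exacts [h₁.maps_nodes n hn, h₂.maps_nodes n hn]
  maps_edges e he := by
    refine ⟨?_, ?_⟩ <;> erw [nodeMap_comp, nodeMap_comp]
    exacts [h₁.maps_edges e he, h₂.maps_edges e he]

def pullbackIsLimit : IsLimit (PullbackCone.mk _ _ (pullback_condition f g)) :=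
  PullbackCone.IsLimit.mk (pullback_condition f g)
    (fun s => pullbackLift s.fst s.snd s.condition) (fun _ => rfl) (fun _ => rfl)
    fun _ _ h₁ h₂ => Hom.ext <| funext fun a =>
      Subtype.ext (Prod.ext (congrFun (congrArg Hom.v h₁) a) (congrFun (congrArg Hom.v h₂) a))

end SiteGraph

/-- The category of site-graphs has all pullbacks. -/
theorem siteGraphs_hasPullbacks (K : Type) (site : K → ℕ) :
    Limits.HasPullbacks (SiteGraph K site) := by
  have {G₁ G₂ M : SiteGraph K site} {f : G₁ ⟶ M} {g : G₂ ⟶ M} : HasLimit (cospan f g) :=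
    ⟨⟨⟨_, SiteGraph.pullbackIsLimit f g⟩⟩⟩
  exact hasPullbacks_of_hasLimit_cospan _
end

section
/- The category of site-graphs does not have all pushouts: there exists a span G1 ← O → G2 of monomorphisms of site-graphs that has no pushout. -/
open CategoryTheory

open CategoryTheory SiteGraph

/-!
Glue a single agent `A` with one site along two embeddings: in `G₁` the site of `A` is free
(joined to the free node), in `G₂` it is bound to the site of a second agent. Any commuting
square over this span sends `A`'s site to one node carrying both a free edge and a bound edge,
which conflict-freeness forbids. So the span has no cocone at all, let alone a pushout.
-/

namespace SiteGraph

variable {K : Type} {site : K → ℕ}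

lemma mono_of_injective {G H : SiteGraph K site} (f : G ⟶ H) (hf : Function.Injective f.v) :
    Mono f :=
  ⟨fun _ _ huw => Hom.ext (funext fun a => hf (congrFun (congrArg Hom.v huw) a))⟩

lemma not_free_and_bound (G : SiteGraph K site) {p q : G.Agent × ℕ}
    (hfree : (some p, none) ∈ G.edges) (hbound : (some p, some q) ∈ G.edges) : False := by
  rcases G.conflict_free _ _ _ _ hfree hbound with ⟨-, h⟩ | ⟨-, h⟩ | h
  · cases h
  · cases h
  · simpa using h (show some p ∈ _ from ⟨by simp, by simp⟩)

end SiteGraph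

section EdgePair

variable {α : Type*} (n m : α)

lemma edgePair_symm :
    ∀ x y, (x, y) ∈ ({(n, m), (m, n)} : Set (α × α)) → (y, x) ∈ ({(n, m), (m, n)} : Set _) := by
  rintro x y (h | h) <;> cases h <;> simp

lemma edgePair_conflict_free (S : Set α) :
    ∀ n1 n2 n1' n2', (n1, n2) ∈ ({(n, m), (m, n)} : Set (α × α)) →
      (n1', n2') ∈ ({(n, m), (m, n)} : Set _) →
      (n1 = n1' ∧ n2 = n2') ∨ (n1 = n2' ∧ n2 = n1') ∨ (({n1, n2} ∩ {n1', n2'} : Set α) ⊆ S) := by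
  rintro n1 n2 n1' n2' (h | h) (h' | h') <;> cases h <;> cases h' <;> simp

end EdgePair

def looseAgent : SiteGraph Unit (fun _ => 1) where
  Agent := Unit
  ty _ := ()
  nodes := {none, some ((), 0)}
  free_mem := Or.inl rfl
  nodes_ok := by rintro a i (h | h) <;> simp_all
  edges := ∅
  edges_sub := by rintro e ⟨⟩
  edges_symm := by rintro n m ⟨⟩
  conflict_free := by rintro _ _ _ _ ⟨⟩

def freeAgent : SiteGraph Unit (fun _ => 1) where
  Agent := Unit
  ty _ := ()
  nodes := {none, some ((), 0)}
  free_mem := Or.inl rfl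
  nodes_ok := by rintro a i (h | h) <;> simp_all
  edges := {(some ((), 0), none), (none, some ((), 0))}
  edges_sub := by rintro e (h | h) <;> subst h <;> simp
  edges_symm := edgePair_symm _ _
  conflict_free := edgePair_conflict_free _ _ _

def boundPair : SiteGraph Unit (fun _ => 1) where
  Agent := Bool
  ty _ := ()
  nodes := {none, some (false, 0), some (true, 0)}
  free_mem := Or.inl rfl
  nodes_ok := by rintro a i (h | h | h) <;> simp_all
  edges := {(some (false, 0), some (true, 0)), (some (true, 0), some (false, 0))}
  edges_sub := by rintro e (h | h) <;> subst h <;> simp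
  edges_symm := edgePair_symm _ _
  conflict_free := edgePair_conflict_free _ _ _

def looseToFree : looseAgent ⟶ freeAgent where
  v := id
  pres_ty _ := rfl
  maps_nodes n hn := by rcases hn with rfl | rfl; exacts [Or.inl rfl, Or.inr rfl]
  maps_edges := by rintro e ⟨⟩

def looseToBound : looseAgent ⟶ boundPair where
  v _ := false
  pres_ty _ := rfl
  maps_nodes n hn := by rcases hn with rfl | rfl; exacts [Or.inl rfl, Or.inr (Or.inl rfl)]
  maps_edges := by rintro e ⟨⟩

lemma not_commSq_looseToFree_looseToBound {X : SiteGraph Unit (fun _ => 1)}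
    (h₁ : freeAgent ⟶ X) (h₂ : boundPair ⟶ X) : ¬ CommSq looseToFree looseToBound h₁ h₂ := by
  rintro ⟨w⟩
  have hglue : h₂.v false = h₁.v () := (congrFun (congrArg Hom.v w) ()).symm
  have hfree := h₁.maps_edges (some ((), 0), none) (Or.inl rfl)
  have hbound := h₂.maps_edges (some (false, 0), some (true, 0)) (Or.inl rfl)
  simp only [nodeMap, Option.map_some, Option.map_none, hglue] at hfree hbound
  exact X.not_free_and_bound hfree hbound

/-- The category of site-graphs does not have all pushouts: there is a
span of monomorphisms of site-graphs with no pushout. -/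
theorem siteGraphs_not_all_pushouts :
    ∃ (K : Type) (site : K → ℕ) (O G1 G2 : SiteGraph K site)
      (f : O ⟶ G1) (g : O ⟶ G2),
      Mono f ∧ Mono g ∧ ¬ Limits.HasColimit (Limits.span f g) := by
  refine ⟨Unit, fun _ => 1, looseAgent, freeAgent, boundPair, looseToFree, looseToBound,
    mono_of_injective _ Function.injective_id,
    mono_of_injective _ fun _ _ _ => rfl, fun _ => ?_⟩
  exact not_commSq_looseToFree_looseToBound _ _ ⟨Limits.pushout.condition⟩
end

section
/- Round-trip completeness of concretization (Theorem 1, part 2): for any trace θ and any trace θ' ∈ C(A2(A1(θ))), the poset abstractions of θ and θ' are isomorphic: A2(A1(θ)) ≅ A2(A1(θ')). -/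
/-- A trace, presented by the data relevant to abstraction: events are the positions
`Fin n` (in the temporal order of the trace), each labeled by its underlying rule, with
the span-witnessed enablement (`pos i j f` iff `(t_i, t_j, f) ∈ <_θ`) and prevention
(`neg i j f` iff `(t_i, t_j, f) ∈ ⊣_θ`) relations between its transitions. -/
structure RawTrace (R S : Type) where
  n : ℕ
  label : Fin n → R
  pos : Fin n → Fin n → S → Prop
  neg : Fin n → Fin n → S → Prop

/-- A poset of events: events, rule labels, enabling precedence `≤` and non-enabling
precedence `⊢`. -/
structure EvPoset (R : Type) where
  E : Type
  label : E → R
  le : E → E → Prop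
  vdash : E → E → Prop

/-- The abstraction `A2 ∘ A1` of a trace: `e < e'` iff `∃ f, e ⇀+_f e'`, `e ⊩ e'` iff
`∃ f, e' ⇀−_f e`, and `≤`, `⊢` are the reflexive-transitive closures. -/
def absPoset {R S : Type} (θ : RawTrace R S) : EvPoset R where
  E := Fin θ.n
  label := θ.label
  le := Relation.ReflTransGen fun i j => ∃ f, θ.pos i j f
  vdash := Relation.ReflTransGen fun i j => ∃ f, θ.neg j i f

/-- The reduced relation (transitive reduction) of a preorder-like relation. -/
def reduced {E : Type} (r : E → E → Prop) (e e' : E) : Prop :=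
  r e e' ∧ e ≠ e' ∧ ¬ ∃ e'', e'' ≠ e ∧ e'' ≠ e' ∧ r e e'' ∧ r e'' e'

/-- The concretizations `C(P)` of a poset `P`, relative to the rule-influence relations
`posRule`, `negRule`: traces given by a linearization `σ` of the events of `P`
(compatible with both precedence orders, as required for the transitions to compose),
whose transitions carry the labels of `P` and reproduce exactly the enablement and
prevention relations recovered by `C1` from rule influence and the reduced relations of
`≤` and `⊢`. -/
def conc {R S : Type} (posRule negRule : R → R → S → Prop) (P : EvPoset R) :
    Set (RawTrace R S) :=
  {θ | ∃ σ : P.E ≃ Fin θ.n,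
    (∀ e, θ.label (σ e) = P.label e) ∧
    (∀ e e', P.le e e' → (σ e : ℕ) ≤ (σ e' : ℕ)) ∧
    (∀ e e', P.vdash e e' → (σ e : ℕ) ≤ (σ e' : ℕ)) ∧
    (∀ e e' f, θ.pos (σ e) (σ e') f ↔
      (posRule (P.label e) (P.label e') f ∧ reduced P.le e e')) ∧
    (∀ e e' f, θ.neg (σ e) (σ e') f ↔
      (negRule (P.label e) (P.label e') f ∧ reduced P.vdash e' e))}

/-- An isomorphism of posets of events: a bijection on events preserving the labels and
both precedence orders. -/
structure EvPosetIso {R : Type} (P Q : EvPoset R) where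
  toEquiv : P.E ≃ Q.E
  label_eq : ∀ e, Q.label (toEquiv e) = P.label e
  le_iff : ∀ e e', P.le e e' ↔ Q.le (toEquiv e) (toEquiv e')
  vdash_iff : ∀ e e', P.vdash e e' ↔ Q.vdash (toEquiv e) (toEquiv e')

/-!
The linearization `σ` witnessing `θ' ∈ C(A2(A1(θ)))` is itself the isomorphism. Up to `σ`,
the enablements of `θ'` are exactly the covering pairs of `≤` in `A2(A1(θ))`: the rule
condition imposed by `C` is automatic, since a cover of a reflexive-transitive closure is a
single step, i.e. an enablement of `θ`, which satisfies `posRule`. Likewise for preventions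
and `⊢`. Enablements of `θ` go forward and preventions backward in time, so both orders are
generated by their covers, and the closures on the two sides agree.
-/

open Relation

section Reduced

variable {α : Type} {r : α → α → Prop}

theorem rel_of_reduced_reflTransGen (hirr : ∀ a, ¬ r a a) {a b : α}
    (h : reduced (ReflTransGen r) a b) : r a b := by
  obtain ⟨hab, hne, hnomid⟩ := h
  obtain rfl | ⟨c, hac, hcb⟩ := hab.cases_head
  · exact absurd rfl hne
  by_cases hc : c = b
  · exact hc ▸ hac
  · have hca : c ≠ a := by rintro rfl; exact hirr c hac
    exact absurd ⟨c, hca, hc, .single hac, hcb⟩ hnomid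

theorem rank_lt_of_reflTransGen (rank : α → ℕ) (hrank : ∀ a b, r a b → rank a < rank b)
    {a b : α} (hab : ReflTransGen r a b) (hne : a ≠ b) : rank a < rank b := by
  have rank_le : ∀ {a b}, ReflTransGen r a b → rank a ≤ rank b := fun h =>
    h.rec le_rfl fun _ hcd hle => hle.trans (hrank _ _ hcd).le
  obtain rfl | ⟨c, hac, hcb⟩ := hab.cases_head
  · exact absurd rfl hne
  · exact (hrank _ _ hac).trans_le (rank_le hcb)

theorem reflTransGen_reduced_reflTransGen (rank : α → ℕ)
    (hrank : ∀ a b, r a b → rank a < rank b) :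
    ReflTransGen (reduced (ReflTransGen r)) = ReflTransGen r := by
  refine le_antisymm (reflTransGen_closed fun a b h => h.1) fun a b hab => ?_
  induction hgap : rank b - rank a using Nat.strong_induction_on generalizing a b with
  | _ n ih =>
    by_cases hne : a = b
    · exact hne ▸ .refl
    by_cases hred : reduced (ReflTransGen r) a b
    · exact .single hred
    obtain ⟨c, hca, hcb, hac, hcb'⟩ : ∃ c, c ≠ a ∧ c ≠ b ∧ ReflTransGen r a c ∧
        ReflTransGen r c b := by
      by_contra hnomid
      exact hred ⟨hab, hne, hnomid⟩
    have hrank_ac := rank_lt_of_reflTransGen rank hrank hac hca.symm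
    have hrank_cb := rank_lt_of_reflTransGen rank hrank hcb' hcb
    exact (ih _ (by omega) _ _ hac rfl).trans (ih _ (by omega) _ _ hcb' rfl)

end Reduced

theorem Equiv.reflTransGen_comp_iff {α β : Type} (σ : α ≃ β) (s : β → β → Prop) {a b : α} :
    ReflTransGen (fun a b => s (σ a) (σ b)) a b ↔ ReflTransGen s (σ a) (σ b) := by
  refine ⟨fun h => h.lift σ fun _ _ => id, fun h => ?_⟩
  simpa [Function.onFun] using h.lift (p := fun a b => s (σ a) (σ b)) σ.symm fun _ _ hxy => by
    simpa [Function.onFun] using hxy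

theorem reflTransGen_iff_of_reduced_iff {α β : Type} {r : α → α → Prop} {s : β → β → Prop}
    (σ : α ≃ β) (rank : α → ℕ) (hrank : ∀ a b, r a b → rank a < rank b)
    (hs : ∀ a b, s (σ a) (σ b) ↔ reduced (ReflTransGen r) a b) (a b : α) :
    ReflTransGen r a b ↔ ReflTransGen s (σ a) (σ b) := by
  rw [← σ.reflTransGen_comp_iff]
  simp only [hs, reflTransGen_reduced_reflTransGen rank hrank]

/-- Theorem 1, part 2: for any trace `θ` and any trace
`θ' ∈ C(A2(A1(θ)))`, the poset abstractions of `θ` and `θ'` are isomorphic. -/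
theorem concretization_abstraction_iso {R S : Type}
    (posRule negRule : R → R → S → Prop) (θ θ' : RawTrace R S)
    (hpos : ∀ i j f, θ.pos i j f → (i : ℕ) < (j : ℕ) ∧ posRule (θ.label i) (θ.label j) f)
    (hneg : ∀ i j f, θ.neg i j f → (j : ℕ) < (i : ℕ) ∧ negRule (θ.label i) (θ.label j) f)
    (hmem : θ' ∈ conc posRule negRule (absPoset θ)) :
    Nonempty (EvPosetIso (absPoset θ) (absPoset θ')) := by
  obtain ⟨σ, hlabel, -, -, hpos', hneg'⟩ := hmem
  have rank_pos (i j : Fin θ.n) : (∃ f, θ.pos i j f) → (i : ℕ) < j :=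
    fun ⟨f, hf⟩ => (hpos i j f hf).1
  have rank_neg (i j : Fin θ.n) : (∃ f, θ.neg j i f) → (i : ℕ) < j :=
    fun ⟨f, hf⟩ => (hneg j i f hf).1
  have step_pos (a b : Fin θ.n) :
      (∃ f, θ'.pos (σ a) (σ b) f) ↔ reduced (absPoset θ).le a b := by
    refine ⟨fun ⟨f, hf⟩ => ((hpos' a b f).1 hf).2, fun h => ?_⟩
    obtain ⟨f, hf⟩ := rel_of_reduced_reflTransGen (fun i hi => (rank_pos i i hi).false) h
    exact ⟨f, (hpos' a b f).2 ⟨(hpos a b f hf).2, h⟩⟩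
  have step_neg (a b : Fin θ.n) :
      (∃ f, θ'.neg (σ b) (σ a) f) ↔ reduced (absPoset θ).vdash a b := by
    refine ⟨fun ⟨f, hf⟩ => ((hneg' b a f).1 hf).2, fun h => ?_⟩
    obtain ⟨f, hf⟩ := rel_of_reduced_reflTransGen (fun i hi => (rank_neg i i hi).false) h
    exact ⟨f, (hneg' b a f).2 ⟨(hneg b a f hf).2, h⟩⟩
  exact ⟨⟨σ, hlabel, reflTransGen_iff_of_reduced_iff σ Fin.val rank_pos step_pos,
    reflTransGen_iff_of_reduced_iff σ Fin.val rank_neg step_neg⟩⟩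
end
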